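/- Iteration step for log-improvement of decay: let N ≥ 3 and suppose u ∈ C²(ℝ^N \ closure(B_ρ(0))) is positive and satisfies -Δu(x) ≥ m |x|^{-N} (ln|x|)^{θ - σ₁} for all |x| > ρ, where m > 0, θ ≥ 0, 0 < σ₁ < 1, and liminf_{|x|→∞} u(x) ≥ 0. Then there exist t > 0 and ρ' ≥ ρ such that u(x) ≥ t |x|^{2-N}(ln|x|)^{θ + 1 - σ₁} for all |x| ≥ ρ'. -/

import Mathlib

open Real Filter Metric Bornology

section OneD

lemma deriv2_nonneg_of_isLocalMin {g g' : ℝ → ℝ} {c : ℝ}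
    (hg : ∀ᶠ t in nhds (0:ℝ), HasDerivAt g (g' t) t)
    (hg' : HasDerivAt g' c 0)
    (hmin : IsLocalMin g 0) : 0 ≤ c := by
  by_contra hc
  push_neg at hc
  have h0 : g' 0 = 0 := by
    rw [← hg.self_of_nhds.deriv]; exact hmin.deriv_eq_zero
  have hslope : Tendsto (slope g' 0) (nhdsWithin 0 {(0:ℝ)}ᶜ) (nhds c) :=
    hasDerivAt_iff_tendsto_slope.1 hg'
  have hev : ∀ᶠ t in nhdsWithin (0:ℝ) (Set.Ioi 0), g' t < 0 := by
    have h1 : ∀ᶠ t in nhdsWithin (0:ℝ) {(0:ℝ)}ᶜ, slope g' 0 t < 0 :=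
      hslope.eventually_lt_const hc
    have h2 : nhdsWithin (0:ℝ) (Set.Ioi 0) ≤ nhdsWithin (0:ℝ) {(0:ℝ)}ᶜ :=
      nhdsWithin_mono 0 (fun t ht => ne_of_gt ht)
    filter_upwards [h2 h1, self_mem_nhdsWithin] with t ht ht'
    have htpos : (0:ℝ) < t := ht'
    have h3 : t⁻¹ * g' t < 0 := by simpa [slope, h0] using ht
    nlinarith [inv_pos.2 htpos]
  obtain ⟨δ₁, hδ₁mem, hδ₁⟩ := mem_nhdsGT_iff_exists_Ioo_subset.1 hev
  have hδ₁pos : (0:ℝ) < δ₁ := hδ₁mem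
  obtain ⟨δ₂, hδ₂pos, hδ₂⟩ := Metric.eventually_nhds_iff.1 (hg.and hmin)
  set t0 : ℝ := min δ₁ δ₂ / 2 with ht0def
  have ht0pos : 0 < t0 := by positivity
  have ht0δ₁ : t0 < δ₁ := by
    have := min_le_left δ₁ δ₂; simp only [ht0def]; linarith
  have ht0δ₂ : t0 < δ₂ := by
    have := min_le_right δ₁ δ₂; simp only [ht0def]; linarith
  have hball : ∀ s ∈ Set.Icc (0:ℝ) t0, HasDerivAt g (g' s) s ∧ g 0 ≤ g s := by
    intro s hs
    apply hδ₂
    have := hs.1; have := hs.2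
    rw [Real.dist_eq]
    rw [abs_sub_lt_iff]; constructor <;> linarith
  have hcont : ContinuousOn g (Set.Icc 0 t0) :=
    fun s hs => ((hball s hs).1.continuousAt).continuousWithinAt
  have hderiv : ∀ s ∈ Set.Ioo (0:ℝ) t0, HasDerivAt g (g' s) s := by
    intro s hs; exact (hball s ⟨hs.1.le, hs.2.le⟩).1
  obtain ⟨ξ, hξ, hξeq⟩ := exists_hasDerivAt_eq_slope g g' ht0pos hcont hderiv
  have hξneg : g' ξ < 0 := hδ₁ ⟨hξ.1, lt_of_lt_of_le hξ.2 (by linarith)⟩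
  have hle : g 0 ≤ g t0 := (hball t0 ⟨ht0pos.le, le_refl _⟩).2
  rw [hξeq] at hξneg
  have : g t0 - g 0 < 0 := by
    have h := div_neg_iff.1 (by simpa using hξneg)
    rcases h with ⟨h1, h2⟩ | ⟨h1, h2⟩
    · linarith
    · linarith
  linarith

end OneD

section Line

variable {E : Type*} [NormedAddCommGroup E] [NormedSpace ℝ E]

lemma eventually_hasDerivAt_line {f : E → ℝ} {z : E} (v : E) (hf : ContDiffAt ℝ 2 f z) :
    ∀ᶠ t : ℝ in nhds 0, HasDerivAt (fun s : ℝ => f (z + s • v)) (fderiv ℝ f (z + t • v) v) t := by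
  have hev : ∀ᶠ y in nhds z, DifferentiableAt ℝ f y :=
    (hf.eventually (by simp)).mono fun y hy => hy.differentiableAt (by norm_num)
  have hcont : Continuous (fun t : ℝ => z + t • v) := by continuity
  have h2 : ∀ᶠ t : ℝ in nhds 0, DifferentiableAt ℝ f (z + t • v) := by
    have ht : Tendsto (fun t : ℝ => z + t • v) (nhds 0) (nhds z) := by
      have := hcont.tendsto 0; simpa using this
    exact ht.eventually hev
  filter_upwards [h2] with t ht
  have hl : HasDerivAt (fun s : ℝ => z + s • v) v t := by
    simpa using ((hasDerivAt_id t).smul_const v).const_add z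
  exact ht.hasFDerivAt.comp_hasDerivAt t hl

lemma hasDerivAt_fderiv_line {f : E → ℝ} {z : E} (v : E) (hf : ContDiffAt ℝ 2 f z) :
    HasDerivAt (fun t : ℝ => fderiv ℝ f (z + t • v) v)
      (iteratedFDeriv ℝ 2 f z ![v, v]) 0 := by
  have hF : DifferentiableAt ℝ (fderiv ℝ f) z :=
    ((hf.fderiv_right (m := 1) (by norm_num)).differentiableAt (by norm_num))
  have hl : HasDerivAt (fun s : ℝ => z + s • v) v 0 := by
    simpa using ((hasDerivAt_id (0:ℝ)).smul_const v).const_add z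
  have e0 : z + (0:ℝ) • v = z := by simp
  have h1 : HasDerivAt (fun t : ℝ => fderiv ℝ f (z + t • v)) (fderiv ℝ (fderiv ℝ f) z v) 0 := by
    have := (e0 ▸ hF.hasFDerivAt).comp_hasDerivAt 0 hl
    simpa [Function.comp_def] using this
  have h2 := ((ContinuousLinearMap.apply ℝ ℝ v).hasFDerivAt).comp_hasDerivAt 0 h1
  rw [iteratedFDeriv_two_apply]
  simpa [Function.comp_def] using h2

lemma iteratedFDeriv_two_diag_eq {f : E → ℝ} {z v : E} {W : ℝ → ℝ} {c : ℝ}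
    (hf : ContDiffAt ℝ 2 f z)
    (hW : ∀ᶠ t : ℝ in nhds 0, HasDerivAt (fun s : ℝ => f (z + s • v)) (W t) t)
    (hW' : HasDerivAt W c 0) :
    iteratedFDeriv ℝ 2 f z ![v, v] = c := by
  have h1 := eventually_hasDerivAt_line v hf
  have heq : W =ᶠ[nhds 0] fun t => fderiv ℝ f (z + t • v) v :=
    (hW.and h1).mono fun t ⟨h, h'⟩ => h.unique h'
  have h3 : HasDerivAt (fun t : ℝ => fderiv ℝ f (z + t • v) v) c 0 :=
    hW'.congr_of_eventuallyEq heq.symm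
  exact (hasDerivAt_fderiv_line v hf).unique h3

end Line

noncomputable def phi0 (a α s : ℝ) : ℝ := s ^ a * (Real.log s / 2) ^ α

noncomputable def phi1 (a α s : ℝ) : ℝ :=
  s ^ (a - 1) * (a * (Real.log s / 2) ^ α + (α / 2) * (Real.log s / 2) ^ (α - 1))

noncomputable def phi2 (a α s : ℝ) : ℝ :=
  s ^ (a - 2) * (a * (a - 1) * (Real.log s / 2) ^ α
    + (α * (2 * a - 1) / 2) * (Real.log s / 2) ^ (α - 1)
    + (α * (α - 1) / 4) * (Real.log s / 2) ^ (α - 2))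

lemma hasDerivAt_phi0 (a α : ℝ) {s : ℝ} (hs : 1 < s) (hL : 0 < Real.log s) :
    HasDerivAt (phi0 a α) (phi1 a α s) s := by
  have hs0 : (0:ℝ) < s := by linarith
  have hL2 : (0:ℝ) < Real.log s / 2 := by linarith
  have h1 : HasDerivAt (fun y : ℝ => y ^ a) (a * s ^ (a - 1)) s :=
    Real.hasDerivAt_rpow_const (Or.inl hs0.ne')
  have h2 : HasDerivAt (fun y : ℝ => Real.log y / 2) (s⁻¹ / 2) s :=
    (Real.hasDerivAt_log hs0.ne').div_const 2
  have h3 : HasDerivAt (fun y : ℝ => y ^ α) (α * (Real.log s / 2) ^ (α - 1)) (Real.log s / 2) :=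
    Real.hasDerivAt_rpow_const (Or.inl hL2.ne')
  have h4 := h3.comp s h2
  have h5 := h1.mul h4
  have h6 : HasDerivAt (phi0 a α)
      (a * s ^ (a - 1) * (Real.log s / 2) ^ α
        + s ^ a * (α * (Real.log s / 2) ^ (α - 1) * (s⁻¹ / 2))) s := by
    exact h5
  convert h6 using 1
  unfold phi1
  rw [Real.rpow_sub hs0, Real.rpow_one]
  field_simp

lemma hasDerivAt_phi1 (a α : ℝ) {s : ℝ} (hs : 1 < s) (hL : 0 < Real.log s) :
    HasDerivAt (phi1 a α) (phi2 a α s) s := by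
  have hs0 : (0:ℝ) < s := by linarith
  have hL2 : (0:ℝ) < Real.log s / 2 := by linarith
  have h1 : HasDerivAt (fun y : ℝ => y ^ (a - 1)) ((a - 1) * s ^ (a - 1 - 1)) s :=
    Real.hasDerivAt_rpow_const (Or.inl hs0.ne')
  have h2 : HasDerivAt (fun y : ℝ => Real.log y / 2) (s⁻¹ / 2) s :=
    (Real.hasDerivAt_log hs0.ne').div_const 2
  have h3 : HasDerivAt (fun y : ℝ => y ^ α) (α * (Real.log s / 2) ^ (α - 1)) (Real.log s / 2) :=
    Real.hasDerivAt_rpow_const (Or.inl hL2.ne')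
  have h4 : HasDerivAt (fun y : ℝ => y ^ (α - 1))
      ((α - 1) * (Real.log s / 2) ^ (α - 1 - 1)) (Real.log s / 2) :=
    Real.hasDerivAt_rpow_const (Or.inl hL2.ne')
  have h5 := (h3.comp s h2).const_mul a
  have h6 := (h4.comp s h2).const_mul (α / 2)
  have h7 := h1.mul (h5.add h6)
  have h8 : HasDerivAt (phi1 a α)
      ((a - 1) * s ^ (a - 1 - 1)
          * (a * (Real.log s / 2) ^ α + (α / 2) * (Real.log s / 2) ^ (α - 1))
        + s ^ (a - 1) * (a * (α * (Real.log s / 2) ^ (α - 1) * (s⁻¹ / 2))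
          + (α / 2) * ((α - 1) * (Real.log s / 2) ^ (α - 1 - 1) * (s⁻¹ / 2)))) s := by
    exact h7
  convert h8 using 1
  unfold phi2
  have e1 : a - 1 - 1 = a - 2 := by ring
  have e2 : α - 1 - 1 = α - 2 := by ring
  rw [e1, e2] at *
  have e3 : s ^ (a - 1) = s ^ (a - 2) * s := by
    rw [show a - 1 = a - 2 + 1 by ring, Real.rpow_add_one hs0.ne']
  rw [e3]
  field_simp
  ring
lemma contDiffAt_phi0 (a α : ℝ) {s : ℝ} (hs : 1 < s) (hL : 0 < Real.log s) :
    ContDiffAt ℝ 2 (phi0 a α) s := by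
  have hs0 : (0:ℝ) < s := by linarith
  have hL2 : (0:ℝ) < Real.log s / 2 := by linarith
  have h1 : ContDiffAt ℝ 2 (fun y : ℝ => y ^ a) s :=
    Real.contDiffAt_rpow_const_of_ne hs0.ne'
  have h2 : ContDiffAt ℝ 2 (fun y : ℝ => Real.log y / 2) s :=
    (Real.contDiffAt_log.2 hs0.ne').div_const 2
  have h3 : ContDiffAt ℝ 2 (fun y : ℝ => y ^ α) (Real.log s / 2) :=
    Real.contDiffAt_rpow_const_of_ne hL2.ne'
  have h4 : ContDiffAt ℝ 2 (fun y : ℝ => (Real.log y / 2) ^ α) s := by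
    have := h3.comp s h2; exact this
  exact h1.mul h4

variable {N : ℕ}

lemma contDiffAt_w (a α : ℝ) {x : EuclideanSpace ℝ (Fin N)} (hx : 1 < ‖x‖) :
    ContDiffAt ℝ 2 (fun y : EuclideanSpace ℝ (Fin N) => phi0 a α (‖y‖ ^ 2)) x := by
  have hs : 1 < ‖x‖ ^ 2 := by nlinarith
  have hL : 0 < Real.log (‖x‖ ^ 2) := Real.log_pos hs
  exact (contDiffAt_phi0 a α hs hL).comp x (contDiff_norm_sq ℝ).contDiffAt

lemma norm_add_smul_single_sq (x : EuclideanSpace ℝ (Fin N)) (i : Fin N) (s : ℝ) :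
    ‖x + s • EuclideanSpace.single i (1:ℝ)‖ ^ 2 = ‖x‖ ^ 2 + 2 * x i * s + s ^ 2 := by
  rw [norm_add_sq_real, real_inner_smul_right, EuclideanSpace.inner_single_right,
    norm_smul, EuclideanSpace.norm_single]
  simp [mul_pow, sq_abs]
  ring
lemma w_iteratedFDeriv_diag (a α : ℝ) {x : EuclideanSpace ℝ (Fin N)} (hx : 1 < ‖x‖) (i : Fin N) :
    iteratedFDeriv ℝ 2 (fun y : EuclideanSpace ℝ (Fin N) => phi0 a α (‖y‖ ^ 2)) x
      ![EuclideanSpace.single i 1, EuclideanSpace.single i 1]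
      = 4 * phi2 a α (‖x‖ ^ 2) * (x i) ^ 2 + 2 * phi1 a α (‖x‖ ^ 2) := by
  set b : ℝ := x i with hb
  set q : ℝ → ℝ := fun s => ‖x‖ ^ 2 + 2 * b * s + s ^ 2 with hq
  have hq0 : q 0 = ‖x‖ ^ 2 := by simp [hq]
  have hqd : ∀ s : ℝ, HasDerivAt q (2 * b + 2 * s) s := by
    intro s
    have h1 : HasDerivAt (fun y : ℝ => ‖x‖ ^ 2 + 2 * b * y) (2 * b) s := by
      simpa using ((hasDerivAt_id s).const_mul (2 * b)).const_add (‖x‖ ^ 2)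
    have h2 : HasDerivAt (fun y : ℝ => y ^ 2) (2 * s) s := by
      simpa using hasDerivAt_pow 2 s
    exact h1.add h2
  have hqcont : Continuous q := by
    fun_prop
  have hqev : ∀ᶠ s : ℝ in nhds 0, 1 < q s := by
    have : Tendsto q (nhds 0) (nhds (‖x‖ ^ 2)) := by
      simpa [hq0] using hqcont.tendsto 0
    exact this.eventually_const_lt (by nlinarith)
  set W : ℝ → ℝ := fun s => phi1 a α (q s) * (2 * b + 2 * s) with hW
  apply iteratedFDeriv_two_diag_eq (contDiffAt_w a α hx) (W := W)
  · filter_upwards [hqev] with s hs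
    have hL : 0 < Real.log (q s) := Real.log_pos hs
    have h1 : HasDerivAt (fun y : ℝ => phi0 a α (q y)) (phi1 a α (q s) * (2 * b + 2 * s)) s :=
      (hasDerivAt_phi0 a α hs hL).comp s (hqd s)
    have heq : (fun y : ℝ => phi0 a α (‖x + y • EuclideanSpace.single i (1:ℝ)‖ ^ 2))
        = fun y : ℝ => phi0 a α (q y) := by
      funext y; rw [norm_add_smul_single_sq]
    rw [hW, heq] -- ?
    exact h1
  · have hs0 : 1 < ‖x‖ ^ 2 := by nlinarith
    have hL0 : 0 < Real.log (‖x‖ ^ 2) := Real.log_pos hs0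
    have h1 : HasDerivAt (fun s : ℝ => phi1 a α (q s)) (phi2 a α (‖x‖ ^ 2) * (2 * b + 2 * 0)) 0 := by
      have := (hasDerivAt_phi1 a α (by rw [hq0]; exact hs0) (by rw [hq0]; exact hL0)).comp 0 (hqd 0)
      simpa [hq0, Function.comp_def] using this
    have h2 : HasDerivAt (fun s : ℝ => 2 * b + 2 * s) 2 0 := by
      simpa using ((hasDerivAt_id (0:ℝ)).const_mul 2).const_add (2 * b)
    have h3 := h1.mul h2
    have : phi2 a α (‖x‖ ^ 2) * (2 * b + 2 * 0) * (2 * b + 2 * 0) + phi1 a α (q 0) * 2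
        = 4 * phi2 a α (‖x‖ ^ 2) * b ^ 2 + 2 * phi1 a α (‖x‖ ^ 2) := by
      rw [hq0]; ring
    rw [hW]
    exact this ▸ h3
noncomputable def lap {N : ℕ} (u : EuclideanSpace ℝ (Fin N) → ℝ)
    (x : EuclideanSpace ℝ (Fin N)) : ℝ :=
  ∑ i, iteratedFDeriv ℝ 2 u x ![EuclideanSpace.single i 1, EuclideanSpace.single i 1]

lemma sum_sq_eq_norm_sq (x : EuclideanSpace ℝ (Fin N)) : ∑ i, (x i) ^ 2 = ‖x‖ ^ 2 := by
  rw [← real_inner_self_eq_norm_sq, PiLp.inner_apply]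
  simp [sq]

lemma lap_w_eq (hN : 3 ≤ N) (α : ℝ) {x : EuclideanSpace ℝ (Fin N)} (hx : 1 < ‖x‖) :
    lap (fun y : EuclideanSpace ℝ (Fin N) => phi0 (((2:ℝ) - N)/2) α (‖y‖ ^ 2)) x
      = α * (α - 1) * ‖x‖ ^ (-(N:ℝ)) * (Real.log ‖x‖) ^ (α - 2)
        - α * ((N:ℝ) - 2) * ‖x‖ ^ (-(N:ℝ)) * (Real.log ‖x‖) ^ (α - 1) := by
  set a : ℝ := ((2:ℝ) - N)/2 with ha
  set r : ℝ := ‖x‖ with hr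
  have hr0 : (0:ℝ) < r := by linarith
  have hlog2 : Real.log (r ^ 2) / 2 = Real.log r := by
    rw [Real.log_pow]; push_cast; ring
  have hsum : lap (fun y : EuclideanSpace ℝ (Fin N) => phi0 a α (‖y‖ ^ 2)) x
      = 4 * phi2 a α (r ^ 2) * (r ^ 2) + 2 * N * phi1 a α (r ^ 2) := by
    unfold lap
    rw [Finset.sum_congr rfl (fun i _ => w_iteratedFDeriv_diag a α hx i)]
    rw [Finset.sum_add_distrib, Finset.sum_const, ← Finset.mul_sum, sum_sq_eq_norm_sq]
    simp [Finset.card_univ]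
    ring
  rw [hsum]
  -- now pure rpow algebra
  have hrpow : ∀ c : ℝ, ((r:ℝ) ^ 2) ^ c = r ^ (2 * c) := by
    intro c
    rw [← Real.rpow_natCast r 2, ← Real.rpow_mul hr0.le]
    norm_num
  unfold phi1 phi2
  rw [hlog2, hrpow, hrpow]
  have e1 : r ^ (2 * (a - 1)) = r ^ (-(N:ℝ)) := by
    congr 1; rw [ha]; ring
  have e2 : r ^ (2 * (a - 2)) * r ^ 2 = r ^ (-(N:ℝ)) := by
    rw [← Real.rpow_natCast r 2, ← Real.rpow_add hr0]
    congr 1; rw [ha]; push_cast; ring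
  have e3 : (4:ℝ) * (r ^ (2*(a-2)) * (a * (a - 1) * Real.log r ^ α
      + α * (2 * a - 1) / 2 * Real.log r ^ (α - 1)
      + α * (α - 1) / 4 * Real.log r ^ (α - 2))) * r ^ 2
      + 2 * N * (r ^ (2*(a-1)) * (a * Real.log r ^ α + α / 2 * Real.log r ^ (α - 1)))
      = (r ^ (2*(a-2)) * r ^ 2) * (4 * (a * (a - 1) * Real.log r ^ α
      + α * (2 * a - 1) / 2 * Real.log r ^ (α - 1)
      + α * (α - 1) / 4 * Real.log r ^ (α - 2)))
      + r ^ (2*(a-1)) * (2 * N * (a * Real.log r ^ α + α / 2 * Real.log r ^ (α - 1))) := by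
    ring
  rw [e3, e1, e2]
  have c1 : 4 * (a * (a - 1)) + 2 * (N:ℝ) * a = 0 := by rw [ha]; ring
  have c2 : 4 * (α * (2 * a - 1) / 2) + 2 * (N:ℝ) * (α / 2) = -(α * ((N:ℝ) - 2)) := by
    rw [ha]; ring
  linear_combination (r ^ (-(N:ℝ)) * Real.log r ^ α) * c1 + (r ^ (-(N:ℝ)) * Real.log r ^ (α - 1)) * c2
lemma w_eq (α : ℝ) {x : EuclideanSpace ℝ (Fin N)} (hx : 1 < ‖x‖) :
    phi0 (((2:ℝ) - N)/2) α (‖x‖ ^ 2) = ‖x‖ ^ ((2:ℝ) - N) * (Real.log ‖x‖) ^ α := by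
  unfold phi0
  have hr0 : (0:ℝ) < ‖x‖ := lt_trans one_pos hx
  rw [Real.log_pow]
  push_cast
  rw [show (2:ℝ) * Real.log ‖x‖ / 2 = Real.log ‖x‖ by ring]
  congr 1
  rw [← Real.rpow_natCast ‖x‖ 2, ← Real.rpow_mul hr0.le]
  congr 1
  ring

set_option maxHeartbeats 1000000 in
theorem stmt16 (N : ℕ) (hN : 3 ≤ N) (m θ σ₁ ρ : ℝ)
    (hm : 0 < m) (hθ : 0 ≤ θ) (hσ₁ : 0 < σ₁) (hσ₁' : σ₁ < 1)
    (u : EuclideanSpace ℝ (Fin N) → ℝ)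
    (huC : ContDiffOn ℝ 2 u {x | ρ < ‖x‖})
    (hupos : ∀ x : EuclideanSpace ℝ (Fin N), ρ < ‖x‖ → 0 < u x)
    (hsuper : ∀ x : EuclideanSpace ℝ (Fin N), ρ < ‖x‖ →
      m * ‖x‖ ^ (-(N:ℝ)) * (Real.log ‖x‖) ^ (θ - σ₁) ≤ -lap u x)
    (hinf : 0 ≤ liminf u (cobounded (EuclideanSpace ℝ (Fin N)))) :
    ∃ t : ℝ, 0 < t ∧ ∃ ρ' : ℝ, ρ ≤ ρ' ∧
      ∀ x : EuclideanSpace ℝ (Fin N), ρ' ≤ ‖x‖ →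
        t * ‖x‖ ^ ((2:ℝ) - N) * (Real.log ‖x‖) ^ (θ + 1 - σ₁) ≤ u x := by
  classical
  have hα0 : 0 < θ + 1 - σ₁ := by linarith
  set α : ℝ := θ + 1 - σ₁ with hαdef
  have hα : 0 < α := hα0
  have hN3 : (3:ℝ) ≤ (N:ℝ) := by exact_mod_cast hN
  set w : EuclideanSpace ℝ (Fin N) → ℝ :=
    fun y => phi0 (((2:ℝ) - N)/2) α (‖y‖ ^ 2) with hwdef
  have hwapp : ∀ y, w y = phi0 (((2:ℝ) - N)/2) α (‖y‖ ^ 2) := fun y => by rw [hwdef]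
  set C : ℝ := α * ((N:ℝ) - 1) with hCdef
  have hC : 0 < C := by rw [hCdef]; nlinarith
  set K0 : ℝ := max 1 |α - 1| with hK0def
  have hK01 : (1:ℝ) ≤ K0 := le_max_left _ _
  set r₀ : ℝ := max (|ρ| + 1) (Real.exp (K0 + 1)) with hr₀def
  have hr₀ρ : ρ < r₀ :=
    lt_of_le_of_lt (le_abs_self ρ) (lt_of_lt_of_le (by linarith) (le_max_left _ _))
  have hr₀log : ∀ r : ℝ, r₀ ≤ r → K0 + 1 ≤ Real.log r := by
    intro r hr
    have h1 : Real.exp (K0 + 1) ≤ r := le_trans (le_max_right _ _) hr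
    calc K0 + 1 = Real.log (Real.exp (K0 + 1)) := (Real.log_exp _).symm
    _ ≤ Real.log r := Real.log_le_log (Real.exp_pos _) h1
  have hr₀1 : (1:ℝ) < r₀ := by
    have := Real.add_one_le_exp (K0 + 1)
    have h2 : Real.exp (K0 + 1) ≤ r₀ := le_max_right _ _
    linarith
  have hr1 : ∀ r : ℝ, r₀ ≤ r → 1 < r := fun r hr => lt_of_lt_of_le hr₀1 hr
  -- Laplacian estimate for the barrier
  have hwlap : ∀ y : EuclideanSpace ℝ (Fin N), r₀ ≤ ‖y‖ →
      -lap w y ≤ C * (‖y‖ ^ (-(N:ℝ)) * Real.log ‖y‖ ^ (α - 1)) := by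
    intro y hy
    have h1 : 1 < ‖y‖ := hr1 _ hy
    have hL1 : K0 + 1 ≤ Real.log ‖y‖ := hr₀log _ hy
    have hL0 : (0:ℝ) < Real.log ‖y‖ := by linarith
    have habs : |α - 1| ≤ Real.log ‖y‖ := le_trans (le_max_right 1 _) (by linarith)
    rw [hwdef, lap_w_eq hN α h1]
    set L : ℝ := Real.log ‖y‖
    set P : ℝ := ‖y‖ ^ (-(N:ℝ)) with hPdef
    have hP : 0 ≤ P := Real.rpow_nonneg (by linarith) _
    have hQ : 0 ≤ L ^ (α - 2) := Real.rpow_nonneg hL0.le _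
    have hsplit : L ^ (α - 1) = L ^ (α - 2) * L := by
      rw [show α - 1 = α - 2 + 1 by ring, Real.rpow_add_one hL0.ne']
    rw [hCdef, hsplit]
    have key : 0 ≤ α * P * L ^ (α - 2) * (L + α - 1) := by
      have h2 : 0 ≤ L + α - 1 := by
        rcases abs_le.1 habs with ⟨ha1, ha2⟩
        linarith
      have := mul_nonneg (mul_nonneg (mul_nonneg hα.le hP) hQ) h2
      linarith [this]
    nlinarith [key]
  -- minimum of u on the inner sphere
  haveI : Nonempty (Fin N) := ⟨⟨0, by omega⟩⟩
  have hr₀0 : (0:ℝ) < r₀ := by linarith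
  have hsne : (Metric.sphere (0 : EuclideanSpace ℝ (Fin N)) r₀).Nonempty :=
    NormedSpace.sphere_nonempty.2 hr₀0.le
  have hsub : Metric.sphere (0 : EuclideanSpace ℝ (Fin N)) r₀ ⊆ {x | ρ < ‖x‖} := by
    intro y hy
    rw [mem_sphere_zero_iff_norm] at hy
    simp only [Set.mem_setOf_eq, hy]
    exact hr₀ρ
  obtain ⟨y₀, hy₀S, hy₀min⟩ := (isCompact_sphere (0 : EuclideanSpace ℝ (Fin N)) r₀).exists_isMinOn
    hsne (huC.continuousOn.mono hsub)
  have hy₀pos : 0 < u y₀ := hupos y₀ (hsub hy₀S)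
  set Wval : ℝ := r₀ ^ ((2:ℝ) - N) * Real.log r₀ ^ α with hWvaldef
  have hWval : 0 < Wval := by
    apply mul_pos (Real.rpow_pos_of_pos hr₀0 _)
    exact Real.rpow_pos_of_pos (Real.log_pos hr₀1) _
  set t : ℝ := min (m / (2 * C)) (u y₀ / Wval) with htdef
  have ht : 0 < t := lt_min (by positivity) (by positivity)
  refine ⟨t, ht, r₀, hr₀ρ.le, ?_⟩
  intro x hx
  have h1x : 1 < ‖x‖ := hr1 _ hx
  have hwx : w x = ‖x‖ ^ ((2:ℝ) - N) * Real.log ‖x‖ ^ α := by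
    rw [hwapp]; exact w_eq α h1x
  rw [mul_assoc, ← hwx]
  -- suffices to show `t * w x ≤ u x`
  have key : ∀ ε : ℝ, 0 < ε → -ε ≤ u x - t * w x := by
    intro ε hε
    -- choose the outer radius
    have hNpos : (0:ℝ) < (N:ℝ) - 2 := by linarith
    have hlo := isLittleO_log_rpow_rpow_atTop α hNpos
    have htend : Tendsto (fun r : ℝ => r ^ ((2:ℝ) - N) * Real.log r ^ α) atTop (nhds 0) := by
      have h2 := hlo.tendsto_div_nhds_zero
      refine Tendsto.congr' ?_ h2
      filter_upwards [eventually_gt_atTop (0:ℝ)] with r hr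
      rw [show (2:ℝ) - N = -((N:ℝ) - 2) by ring, Real.rpow_neg hr.le, div_eq_mul_inv]
      ring
    have hev2 : ∀ᶠ R in atTop, t * (R ^ ((2:ℝ) - N) * Real.log R ^ α) < ε := by
      have h3 : Tendsto (fun R : ℝ => t * (R ^ ((2:ℝ) - N) * Real.log R ^ α)) atTop (nhds 0) := by
        simpa using htend.const_mul t
      exact h3.eventually_lt_const hε
    obtain ⟨M, hM⟩ := eventually_atTop.1 hev2
    set R₂ : ℝ := max M (‖x‖ + 1) with hR₂def
    have hR₂x : ‖x‖ < R₂ := lt_of_lt_of_le (by linarith) (le_max_right _ _)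
    have hR₂r₀ : r₀ < R₂ := by
      have : r₀ ≤ ‖x‖ := hx
      linarith
    have hR₂bound : t * (R₂ ^ ((2:ℝ) - N) * Real.log R₂ ^ α) < ε := hM R₂ (le_max_left _ _)
    -- the compact annulus
    set K : Set (EuclideanSpace ℝ (Fin N)) :=
      Metric.closedBall 0 R₂ \ Metric.ball 0 r₀ with hKdef
    have hKmem : ∀ y, y ∈ K ↔ r₀ ≤ ‖y‖ ∧ ‖y‖ ≤ R₂ := by
      intro y
      simp only [hKdef, Set.mem_diff, Metric.mem_closedBall, Metric.mem_ball,
        dist_zero_right, not_lt]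
      tauto
    have hKcp : IsCompact K := (isCompact_closedBall _ _).diff Metric.isOpen_ball
    have hxK : x ∈ K := (hKmem x).2 ⟨hx, hR₂x.le⟩
    set v : EuclideanSpace ℝ (Fin N) → ℝ := fun y => u y - t * w y with hvdef
    have hKρ : ∀ y ∈ K, ρ < ‖y‖ := fun y hy => lt_of_lt_of_le hr₀ρ ((hKmem y).1 hy).1
    have hvcont : ContinuousOn v K := by
      apply ContinuousOn.sub
      · exact huC.continuousOn.mono (fun y hy => hKρ y hy)
      · apply ContinuousOn.mul continuousOn_const
        intro y hy
        exact ((contDiffAt_w _ α (hr1 _ ((hKmem y).1 hy).1)).continuousAt).continuousWithinAt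
    obtain ⟨z, hzK, hzmin⟩ := hKcp.exists_isMinOn ⟨x, hxK⟩ hvcont
    have hzb := (hKmem z).1 hzK
    have hvzx : v z ≤ v x := isMinOn_iff.1 hzmin x hxK
    have hvz : -ε ≤ v z := by
      rcases eq_or_lt_of_le hzb.1 with hz1 | hz1
      · -- inner sphere
        have hz1' : ‖z‖ = r₀ := hz1.symm
        have h1z : 1 < ‖z‖ := by rw [hz1']; exact hr₀1
        have hwz : w z = Wval := by
          rw [hwapp]
          rw [w_eq α h1z, hz1', hWvaldef]
        have hzS : z ∈ Metric.sphere (0 : EuclideanSpace ℝ (Fin N)) r₀ := by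
          simp [mem_sphere_zero_iff_norm, hz1']
        have huz : u y₀ ≤ u z := isMinOn_iff.1 hy₀min z hzS
        have htW : t * Wval ≤ u y₀ := by
          have h4 : t ≤ u y₀ / Wval := min_le_right _ _
          rw [le_div_iff₀ hWval] at h4
          linarith
        rw [hvdef]
        simp only []
        rw [hwz]
        linarith
      rcases eq_or_lt_of_le hzb.2 with hz2 | hz2
      · -- outer sphere
        have h1z : 1 < ‖z‖ := hr1 _ hzb.1
        have hwz : w z = R₂ ^ ((2:ℝ) - N) * Real.log R₂ ^ α := by
          rw [hwapp, w_eq α h1z, hz2]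
        have huz : 0 < u z := hupos z (hKρ z hzK)
        rw [hvdef]
        simp only []
        rw [hwz]
        linarith
      · -- interior: contradiction with the equation
        exfalso
        have hU : IsOpen {y : EuclideanSpace ℝ (Fin N) | r₀ < ‖y‖ ∧ ‖y‖ < R₂} :=
          (isOpen_lt continuous_const continuous_norm).inter
            (isOpen_lt continuous_norm continuous_const)
        have hUK : {y : EuclideanSpace ℝ (Fin N) | r₀ < ‖y‖ ∧ ‖y‖ < R₂} ⊆ K := by
          intro y hy
          exact (hKmem y).2 ⟨hy.1.le, hy.2.le⟩
        have hloc : IsLocalMin v z :=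
          hzmin.isLocalMin (Filter.mem_of_superset (hU.mem_nhds ⟨hz1, hz2⟩) hUK)
        have hρz : ρ < ‖z‖ := hKρ z hzK
        have hu2 : ContDiffAt ℝ 2 u z :=
          huC.contDiffAt ((isOpen_lt continuous_const continuous_norm).mem_nhds hρz)
        have h1z : 1 < ‖z‖ := hr1 _ hzb.1
        have hw2 : ContDiffAt ℝ 2 w z := by
          rw [hwdef]; exact contDiffAt_w _ α h1z
        have hi : ∀ i : Fin N,
            0 ≤ iteratedFDeriv ℝ 2 u z ![EuclideanSpace.single i 1, EuclideanSpace.single i 1]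
              - t * iteratedFDeriv ℝ 2 w z
                  ![EuclideanSpace.single i 1, EuclideanSpace.single i 1] := by
          intro i
          set e : EuclideanSpace ℝ (Fin N) := EuclideanSpace.single i 1 with hedef
          apply deriv2_nonneg_of_isLocalMin
            (g := fun s : ℝ => u (z + s • e) - t * w (z + s • e))
            (g' := fun s : ℝ => fderiv ℝ u (z + s • e) e - t * fderiv ℝ w (z + s • e) e)
          · filter_upwards [eventually_hasDerivAt_line e hu2,
              eventually_hasDerivAt_line e hw2] with s h1 h2
            exact h1.sub (h2.const_mul t)
          · exact (hasDerivAt_fderiv_line e hu2).sub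
              ((hasDerivAt_fderiv_line e hw2).const_mul t)
          · have hline : Continuous (fun s : ℝ => z + s • e) :=
              continuous_const.add (continuous_id.smul continuous_const)
            have h1 : IsLocalMin (v ∘ fun s : ℝ => z + s • e) 0 := by
              apply IsLocalMin.comp_continuous _ hline.continuousAt
              simpa using hloc
            exact h1
        have hsum : 0 ≤ lap u z - t * lap w z := by
          unfold lap
          rw [Finset.mul_sum, ← Finset.sum_sub_distrib]
          exact Finset.sum_nonneg fun i _ => hi i
        have hL0 : (0:ℝ) < Real.log ‖z‖ := by
          have := hr₀log _ hzb.1; linarith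
        set P : ℝ := ‖z‖ ^ (-(N:ℝ)) * Real.log ‖z‖ ^ (α - 1) with hPdef
        have hP : 0 < P :=
          mul_pos (Real.rpow_pos_of_pos (by linarith) _) (Real.rpow_pos_of_pos hL0 _)
        have hsz : m * P ≤ -lap u z := by
          have := hsuper z hρz
          rw [show θ - σ₁ = α - 1 by rw [hαdef]; ring] at this
          rw [hPdef, ← mul_assoc]
          exact this
        have hwz : -lap w z ≤ C * P := hwlap z hzb.1
        have htm : t * (2 * C) ≤ m := by
          have h4 : t ≤ m / (2 * C) := min_le_left _ _
          rw [le_div_iff₀ (by positivity)] at h4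
          exact h4
        nlinarith [mul_le_mul_of_nonneg_left hwz ht.le, hP, hsum, hsz,
          mul_le_mul_of_nonneg_right htm hP.le]
    have hvxeq : v x = u x - t * w x := by rw [hvdef]
    linarith [hvzx, hvz]
  by_contra hcon
  push_neg at hcon
  have h5 := key ((t * w x - u x) / 2) (by linarith)
  linarith
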